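/- arXiv:1807.10185 — 2 statements merged into one kernel-verified Lean document; each statement's English description precedes it below -/
import Mathlib

section
/- For all real δ ∈ (0, 1/2) and all ψ ∈ [0, π/2], the quantity cos(δ(π/2 − ψ)) − 1 + sin(ψ + δ(π/2 − ψ))·sin(δπ/(2(1−δ))) is strictly positive. -/
theorem stmt_5 (δ ψ : ℝ) (hδ : δ ∈ Set.Ioo (0:ℝ) (1/2)) (hψ : ψ ∈ Set.Icc 0 (Real.pi / 2)) :
    0 < Real.cos (δ * (Real.pi / 2 - ψ)) - 1 +
      Real.sin (ψ + δ * (Real.pi / 2 - ψ)) * Real.sin (δ * Real.pi / (2 * (1 - δ))) := by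
  obtain ⟨hδ0, hδ1⟩ := hδ
  obtain ⟨hψ0, hψ1⟩ := hψ
  have hπ := Real.pi_pos
  set θ := δ * (Real.pi / 2 - ψ) with hθdef
  set c := δ * Real.pi / (2 * (1 - δ)) with hcdef
  have hθ0 : 0 ≤ θ := by
    apply mul_nonneg hδ0.le; linarith
  have hθle : θ ≤ δ * (Real.pi / 2) := by
    apply mul_le_mul_of_nonneg_left _ hδ0.le; linarith
  have hθlt : θ < Real.pi / 2 := by nlinarith
  have hc0 : 0 < c := by
    apply div_pos (by positivity); linarith
  have hclt : c < Real.pi / 2 := by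
    rw [hcdef, div_lt_iff₀ (by linarith)]; nlinarith
  have hθc : θ < c := by
    have : δ * (Real.pi / 2) < c := by
      rw [hcdef, lt_div_iff₀ (by linarith)]; nlinarith [mul_pos (mul_pos hδ0 hδ0) hπ]
    linarith
  have hsinc : Real.sin θ < Real.sin c :=
    Real.sin_lt_sin_of_lt_of_le_pi_div_two (by linarith) hclt.le hθc
  have hsincpos : 0 < Real.sin c := Real.sin_pos_of_pos_of_lt_pi hc0 (by linarith)
  have hψθ : ψ + θ ≤ Real.pi / 2 := by nlinarith
  have hmono : Real.sin θ ≤ Real.sin (ψ + θ) :=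
    Real.sin_le_sin_of_le_of_le_pi_div_two (by linarith) hψθ (by linarith)
  rcases eq_or_lt_of_le hθ0 with h0 | h0
  · -- θ = 0, so ψ = π/2
    have hψ : ψ = Real.pi / 2 := by
      have : Real.pi / 2 - ψ = 0 := by
        rcases mul_eq_zero.mp h0.symm with h | h
        · linarith
        · exact h
      linarith
    rw [← h0, hψ]
    simp
    exact hsincpos
  · have hsinθ : 0 < Real.sin θ := Real.sin_pos_of_pos_of_lt_pi h0 (by linarith)
    have hcosθ0 : 0 ≤ Real.cos θ := Real.cos_nonneg_of_mem_Icc ⟨by linarith, hθlt.le⟩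
    have hcosθ1 : Real.cos θ ≤ 1 := Real.cos_le_one θ
    have hpyth := Real.sin_sq_add_cos_sq θ
    -- 1 - cos θ ≤ sin² θ < sin θ * sin c ≤ sin (ψ+θ) * sin c
    nlinarith [mul_lt_mul_of_pos_left hsinc hsinθ,
      mul_le_mul_of_nonneg_right hmono hsincpos.le]
end

section
/- Define M : (0,1) × ℝ → ℝ by M(t,y) = cos(tπ/(2(1−t)))·(cos(ty) − cos(y)) + sin(tπ/(2(1−t)))·(sin(ty) + sin((1−t)y) − sin(y)). Then there exists d₁ ∈ (0, 1/4) such that for all δ ∈ (0, d₁) and all φ ∈ (−1/(8π), 0), M(δ, φ) ≥ 0. -/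
/-- The function `M` from the proof of the crucial estimate. -/
noncomputable def M (t y : ℝ) : ℝ :=
  Real.cos (t * Real.pi / (2 * (1 - t))) * (Real.cos (t * y) - Real.cos y) +
    Real.sin (t * Real.pi / (2 * (1 - t))) *
      (Real.sin (t * y) + Real.sin ((1 - t) * y) - Real.sin y)

set_option maxHeartbeats 800000 in
/-- Purely algebraic core of the estimate. -/
private lemma key_alg (δ φ ca sa x y u v w : ℝ)
    (hδ0 : 0 < δ) (hδ1 : δ < 1/8) (hφ1 : φ < 0) (hφlb : -(1/24) < φ)
    (hca : 1/2 ≤ ca) (hsa0 : 0 ≤ sa) (hsa : sa ≤ 2*δ)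
    (hc1 : x ≥ 1 - (δ*φ)^2/2 - (δ*φ)^4*(5/96))
    (hc2 : y ≤ 1 - φ^2/2 + φ^4*(5/96))
    (hs1 : u ≥ δ*φ - (δ*φ)^3/6 - (δ*φ)^4*(5/96))
    (hs2 : v ≥ (1-δ)*φ - ((1-δ)*φ)^3/6 - ((1-δ)*φ)^4*(5/96))
    (hs3 : w ≤ φ - φ^3/6 + φ^4*(5/96)) :
    ca * (x - y) + sa * (u + v - w) ≥ 0 := by
  have h1δ : (0:ℝ) < 1 - δ := by linarith
  have hφ2 : φ ^ 2 ≤ 1/576 := by nlinarith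
  have hδ2 : δ ^ 2 ≤ 1/64 := by nlinarith
  have hA : (δ * φ) ^ 2 ≤ φ ^ 2 / 64 := by nlinarith [sq_nonneg φ]
  have hB1 : (δ * φ) ^ 4 ≤ φ ^ 2 / 576 := by
    nlinarith [sq_nonneg (δ * φ), sq_nonneg φ, mul_nonneg (sq_nonneg (δ*φ)) (sq_nonneg φ)]
  have hB2 : ((1 - δ) * φ) ^ 4 ≤ φ ^ 2 / 576 := by
    nlinarith [sq_nonneg ((1 - δ) * φ), sq_nonneg φ,
      mul_nonneg (sq_nonneg ((1 - δ) * φ)) (sq_nonneg φ)]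
  have hB3 : φ ^ 4 ≤ φ ^ 2 / 576 := by nlinarith [sq_nonneg φ]
  -- cosine difference lower bound
  have hC : x - y ≥ φ ^ 2 / 4 := by linarith [sq_nonneg φ]
  -- sine combination lower bound
  have hcube : (δ * φ) ^ 3 + ((1 - δ) * φ) ^ 3 - φ ^ 3 = -3 * (δ * (1 - δ) * φ ^ 3) := by
    ring
  have hφ3 : δ * (1 - δ) * φ ^ 3 ≥ -(δ * φ ^ 2 / 24) := by
    nlinarith [mul_nonneg (mul_nonneg (mul_nonneg hδ0.le h1δ.le)
        (by linarith : (0:ℝ) ≤ φ + 1/24)) (sq_nonneg φ),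
      mul_nonneg (mul_nonneg hδ0.le hδ0.le) (sq_nonneg φ)]
  have hS : u + v - w ≥ -(δ * φ ^ 2 / 48) - φ ^ 2 / 2000 := by
    nlinarith [hs1, hs2, hs3, hcube, hφ3, hB1, hB2, hB3]
  have hL0 : -(δ * φ ^ 2 / 48) - φ ^ 2 / 2000 ≤ 0 := by
    nlinarith [sq_nonneg φ, mul_nonneg hδ0.le (sq_nonneg φ)]
  have hsinS : sa * (u + v - w) ≥ 2 * δ * (-(δ * φ ^ 2 / 48) - φ ^ 2 / 2000) := by
    nlinarith [mul_nonneg hsa0 (sub_nonneg.2 hS),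
      mul_nonneg (sub_nonneg.2 hsa) (neg_nonneg.2 hL0)]
  have hC0 : (0:ℝ) ≤ x - y := by nlinarith [sq_nonneg φ]
  have hcosC : ca * (x - y) ≥ (1/2) * (φ ^ 2 / 4) := by
    nlinarith [mul_nonneg (by linarith : (0:ℝ) ≤ ca - 1/2) hC0, sq_nonneg φ]
  have h2δL : 2 * δ * (-(δ * φ ^ 2 / 48) - φ ^ 2 / 2000) ≥ -(φ ^ 2 / 16) := by
    nlinarith [mul_nonneg (by linarith : (0:ℝ) ≤ 1/8 - δ) (sq_nonneg φ),
      mul_nonneg (mul_nonneg (by linarith : (0:ℝ) ≤ 1/8 - δ) hδ0.le) (sq_nonneg φ),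
      mul_nonneg hδ0.le (sq_nonneg φ)]
  nlinarith [sq_nonneg φ]

set_option maxHeartbeats 800000 in
theorem stmt_8 :
    ∃ d₁ : ℝ, d₁ ∈ Set.Ioo (0:ℝ) (1/4) ∧
      ∀ δ φ : ℝ, δ ∈ Set.Ioo 0 d₁ → φ ∈ Set.Ioo (-(1 / (8 * Real.pi))) 0 →
        M δ φ ≥ 0 := by
  refine ⟨1/8, ⟨by norm_num, by norm_num⟩, ?_⟩
  rintro δ φ ⟨hδ0, hδ1⟩ ⟨hφ0, hφ1⟩
  have hπ3 : (3:ℝ) < Real.pi := Real.pi_gt_three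
  have hπ4 : Real.pi < 3.15 := Real.pi_lt_d2
  have h1δ : (0:ℝ) < 1 - δ := by linarith
  have hφlb : -(1/24) < φ := by
    have h1 : (1:ℝ)/(8*Real.pi) < 1/24 := by
      rw [div_lt_div_iff₀ (by linarith) (by norm_num)]; linarith
    linarith
  -- absolute value bounds
  have habsφ : |φ| ≤ 1 := by rw [abs_le]; constructor <;> linarith
  have habsδφ : |δ * φ| ≤ 1 := by
    rw [abs_mul, abs_of_pos hδ0, abs_of_neg hφ1]; nlinarith
  have habs1δφ : |(1 - δ) * φ| ≤ 1 := by
    rw [abs_mul, abs_of_pos h1δ, abs_of_neg hφ1]; nlinarith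
  -- the angle a
  set a := δ * Real.pi / (2 * (1 - δ)) with ha
  have ha0 : 0 ≤ a := by positivity
  have ha2δ : a ≤ 2 * δ := by
    rw [ha, div_le_iff₀ (by linarith)]
    nlinarith
  have ha1 : a ≤ 1/4 := by linarith
  have habsa : |a| ≤ 1 := by rw [abs_of_nonneg ha0]; linarith
  -- cos a ≥ 1/2
  have hca : 1/2 ≤ Real.cos a := by
    have hb := (abs_sub_le_iff.1 (Real.cos_bound habsa)).2
    rw [abs_of_nonneg ha0] at hb
    nlinarith [sq_nonneg a, pow_le_pow_left₀ ha0 ha1 2, pow_le_pow_left₀ ha0 ha1 4]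
  -- sin a bounds
  have hsa0 : 0 ≤ Real.sin a :=
    Real.sin_nonneg_of_nonneg_of_le_pi ha0 (by linarith)
  have hsa : Real.sin a ≤ 2 * δ := le_trans (Real.sin_le ha0) ha2δ
  -- even powers of abs
  have habspow : ∀ x : ℝ, |x| ^ 4 = x ^ 4 := by
    intro x; rw [← abs_pow]; exact abs_of_nonneg (by positivity)
  -- cosine estimates
  have hc1 : Real.cos (δ * φ) ≥ 1 - (δ * φ) ^ 2 / 2 - (δ * φ) ^ 4 * (5/96) := by
    have hb := (abs_sub_le_iff.1 (Real.cos_bound habsδφ)).2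
    rw [habspow] at hb; linarith
  have hc2 : Real.cos φ ≤ 1 - φ ^ 2 / 2 + φ ^ 4 * (5/96) := by
    have hb := (abs_sub_le_iff.1 (Real.cos_bound habsφ)).1
    rw [habspow] at hb; linarith
  -- sine estimates
  have hs1 : Real.sin (δ * φ) ≥ δ * φ - (δ * φ) ^ 3 / 6 - (δ * φ) ^ 4 * (5/96) := by
    have hb := (abs_sub_le_iff.1 (Real.sin_bound habsδφ)).2
    have h5 : |δ * φ| ^ 5 ≤ |δ * φ| ^ 4 := by nlinarith [pow_nonneg (abs_nonneg (δ * φ)) 4, abs_nonneg (δ * φ)]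
    rw [habspow] at h5
    have h6 : |δ * φ| ^ 5 / 100 ≤ (δ * φ) ^ 4 * (5/96) := by
      have h0 : (0:ℝ) ≤ (δ * φ) ^ 4 := by positivity
      linarith
    linarith [le_trans hb h6]
  have hs2 : Real.sin ((1 - δ) * φ) ≥
      (1 - δ) * φ - ((1 - δ) * φ) ^ 3 / 6 - ((1 - δ) * φ) ^ 4 * (5/96) := by
    have hb := (abs_sub_le_iff.1 (Real.sin_bound habs1δφ)).2
    have h5 : |(1 - δ) * φ| ^ 5 ≤ |(1 - δ) * φ| ^ 4 := by nlinarith [pow_nonneg (abs_nonneg ((1 - δ) * φ)) 4, abs_nonneg ((1 - δ) * φ)]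
    rw [habspow] at h5
    have h6 : |(1 - δ) * φ| ^ 5 / 100 ≤ ((1 - δ) * φ) ^ 4 * (5/96) := by
      have h0 : (0:ℝ) ≤ ((1 - δ) * φ) ^ 4 := by positivity
      linarith
    linarith [le_trans hb h6]
  have hs3 : Real.sin φ ≤ φ - φ ^ 3 / 6 + φ ^ 4 * (5/96) := by
    have hb := (abs_sub_le_iff.1 (Real.sin_bound habsφ)).1
    have h5 : |φ| ^ 5 ≤ |φ| ^ 4 := by nlinarith [pow_nonneg (abs_nonneg (φ)) 4, abs_nonneg (φ)]
    rw [habspow] at h5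
    have h6 : |φ| ^ 5 / 100 ≤ (φ) ^ 4 * (5/96) := by
      have h0 : (0:ℝ) ≤ (φ) ^ 4 := by positivity
      linarith
    linarith [le_trans hb h6]
  exact key_alg δ φ (Real.cos a) (Real.sin a) _ _ _ _ _
    hδ0 hδ1 hφ1 hφlb hca hsa0 hsa hc1 hc2 hs1 hs2 hs3
end
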